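/- arXiv:2501.16855 — 4 statements merged into one kernel-verified Lean document; each statement's English description precedes it below -/
import Mathlib

section
/- Let (x_n) be a summing sequence in a real Banach space X, i.e. (x_n) is seminormalised (0 < inf_n ‖x_n‖ and sup_n ‖x_n‖ < ∞), basic (there is K ≥ 1 with ‖∑_{i=1}^m a_i x_i‖ ≤ K ‖∑_{i=1}^p a_i x_i‖ for all m ≤ p and all scalars a_1, …, a_p), and there exists x* ∈ X* with x*(x_n) = 1 for all n. Then there is a uniformly bounded sequence of functionals (s_n) in X* (i.e. sup_n ‖s_n‖ < ∞) such that s_n(x_m) = 1 whenever n ≤ m and s_n(x_m) = 0 whenever n > m. -/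
open Filter Topology Finset

/-- For a summing sequence `(x_n)` in a real Banach space there is a uniformly bounded
sequence of functionals `(s_n)` in `X*` with `s_n (x_m) = 1` for `n ≤ m` and `s_n (x_m) = 0`
for `n > m`. -/
theorem summing_sequence_exists_staircase_functionals
    (X : Type*) [NormedAddCommGroup X] [NormedSpace ℝ X] [CompleteSpace X]
    (x : ℕ → X)
    (h_below : ∃ a : ℝ, 0 < a ∧ ∀ n, a ≤ ‖x n‖)
    (h_above : ∃ b : ℝ, ∀ n, ‖x n‖ ≤ b)
    (h_basic : ∃ K : ℝ, 1 ≤ K ∧ ∀ (p m : ℕ), m ≤ p → ∀ a : ℕ → ℝ,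
      ‖∑ i ∈ range m, a i • x i‖ ≤ K * ‖∑ i ∈ range p, a i • x i‖)
    (h_summing : ∃ f : X →L[ℝ] ℝ, ∀ n, f (x n) = 1) :
    ∃ s : ℕ → (X →L[ℝ] ℝ), (∃ c : ℝ, ∀ n, ‖s n‖ ≤ c) ∧
      (∀ n m : ℕ, n ≤ m → s n (x m) = 1) ∧
      (∀ n m : ℕ, m < n → s n (x m) = 0) := by
  classical
  obtain ⟨a0, ha0, hxa⟩ := h_below
  obtain ⟨K, hK1, hK⟩ := h_basic
  obtain ⟨f, hf⟩ := h_summing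
  have hxne : ∀ n, x n ≠ 0 := by
    intro n hn
    have := hxa n
    rw [hn, norm_zero] at this
    linarith
  -- linear independence
  have hli : LinearIndependent ℝ x := by
    rw [linearIndependent_iff']
    intro s g hsum i hi
    set p := s.sup id + 1 with hp
    have hsp : s ⊆ range p := fun j hj =>
      mem_range.mpr (Nat.lt_succ_of_le (le_sup (f := id) hj))
    set A : ℕ → ℝ := fun j => if j ∈ s then g j else 0 with hA
    have hsum' : ∑ j ∈ range p, A j • x j = 0 := by
      rw [← sum_subset hsp (fun j _ hj => by simp [hA, hj])]
      rw [← hsum]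
      exact sum_congr rfl fun j hj => by simp [hA, hj]
    have hzero : ∀ m, m ≤ p → ∑ j ∈ range m, A j • x j = 0 := by
      intro m hm
      have h1 := hK p m hm A
      rw [hsum', norm_zero, mul_zero] at h1
      exact norm_le_zero_iff.mp h1
    have hi' : i < p := mem_range.mp (hsp hi)
    have h1 : A i • x i = 0 := by
      have e1 := hzero (i + 1) hi'
      have e2 := hzero i hi'.le
      rw [sum_range_succ, e2, zero_add] at e1
      exact e1
    rcases smul_eq_zero.mp h1 with h | h
    · simpa [hA, hi] using h
    · exact absurd h (hxne i)
  set S := Submodule.span ℝ (Set.range x) with hS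
  let b : Module.Basis ℕ ℝ S := Module.Basis.span hli
  have hb : ∀ i, (b i : X) = x i := fun i => congrArg Subtype.val (Module.Basis.span_apply hli i)
  -- the candidate truncated functionals on the span
  let gl : ℕ → (S →ₗ[ℝ] ℝ) := fun n =>
    (Finsupp.lsum ℝ fun i => if i < n then (LinearMap.id : ℝ →ₗ[ℝ] ℝ) else 0) ∘ₗ
      (b.repr : S →ₗ[ℝ] (ℕ →₀ ℝ))
  have hgl : ∀ n (v : S), gl n v = (b.repr v).sum fun i c => if i < n then c else 0 := by
    intro n v
    simp only [gl, LinearMap.comp_apply, Finsupp.coe_lsum, LinearEquiv.coe_coe]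
    refine Finsupp.sum_congr fun i _ => ?_
    by_cases h : i < n <;> simp [h]
  have hglx : ∀ n m, gl n ⟨x m, Submodule.subset_span (Set.mem_range_self m)⟩ =
      if m < n then 1 else 0 := by
    intro n m
    have hbm : (⟨x m, Submodule.subset_span (Set.mem_range_self m)⟩ : S) = b m :=
      Subtype.ext (hb m).symm
    rw [hbm, hgl, Module.Basis.repr_self, Finsupp.sum_single_index (by simp)]
  have hfK : (0:ℝ) ≤ ‖f‖ * K := mul_nonneg (norm_nonneg f) (by linarith)
  have bound : ∀ n (v : S), ‖gl n v‖ ≤ ‖f‖ * K * ‖v‖ := by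
    intro n v
    set c := b.repr v with hc
    set p := c.support.sup id + 1 with hp
    have hsp : c.support ⊆ range p := fun j hj =>
      mem_range.mpr (Nat.lt_succ_of_le (le_sup (f := id) hj))
    set A : ℕ → ℝ := fun j => c j with hA
    -- v as a finite linear combination
    have hv : (v : X) = ∑ i ∈ range p, A i • x i := by
      have h2 : c.sum (fun i t => t • b i) = v := by
        have h1 := b.linearCombination_repr v
        rw [← h1]; rfl
      have h3 : ((c.sum (fun i t => t • b i) : S) : X) = ∑ i ∈ c.support, A i • x i := by
        rw [Finsupp.sum]
        push_cast
        exact sum_congr rfl fun i _ => by rw [hb]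
      rw [← h2, h3]
      exact sum_subset hsp (fun j _ hj => by
        simp [hA, Finsupp.notMem_support_iff.mp hj])
    set m := min n p with hm
    have hglv : gl n v = f (∑ i ∈ range m, A i • x i) := by
      rw [hgl, ← hc]
      rw [Finsupp.sum_of_support_subset c hsp _ (fun i _ => by simp)]
      rw [map_sum]
      have h4 : ∀ i ∈ range m, f (A i • x i) = A i := by
        intro i _
        rw [map_smul, hf, smul_eq_mul, mul_one]
      rw [sum_congr rfl h4]
      rw [← sum_filter]
      refine sum_congr ?_ fun _ _ => rfl
      ext i
      simp only [mem_filter, mem_range, hm, lt_min_iff]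
      tauto
    rw [hglv]
    calc ‖f (∑ i ∈ range m, A i • x i)‖
        ≤ ‖f‖ * ‖∑ i ∈ range m, A i • x i‖ := f.le_opNorm _
      _ ≤ ‖f‖ * (K * ‖∑ i ∈ range p, A i • x i‖) := by
          exact mul_le_mul_of_nonneg_left (hK p m (min_le_right n p) A) (norm_nonneg f)
      _ = ‖f‖ * K * ‖(v : X)‖ := by rw [← hv]; ring
      _ = ‖f‖ * K * ‖v‖ := rfl
  let gc : ℕ → (S →L[ℝ] ℝ) := fun n => LinearMap.mkContinuous (gl n) (‖f‖ * K) (bound n)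
  choose G hG1 hG2 using fun n => exists_extension_norm_eq S (gc n)
  refine ⟨fun n => f - G n, ⟨‖f‖ + ‖f‖ * K, ?_⟩, ?_, ?_⟩
  · intro n
    calc ‖f - G n‖ ≤ ‖f‖ + ‖G n‖ := norm_sub_le _ _
      _ ≤ ‖f‖ + ‖f‖ * K := by
          rw [hG2 n]
          have := (gl n).mkContinuous_norm_le hfK (bound n)
          linarith
  · intro n m hnm
    have h1 : G n (x m) = gc n ⟨x m, Submodule.subset_span (Set.mem_range_self m)⟩ :=
      hG1 n ⟨x m, Submodule.subset_span (Set.mem_range_self m)⟩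
    simp only [ContinuousLinearMap.sub_apply, h1]
    have h2 : gc n ⟨x m, Submodule.subset_span (Set.mem_range_self m)⟩ = 0 := by
      have := hglx n m
      simp only [gc, LinearMap.mkContinuous_apply]
      rw [this, if_neg (by omega)]
    rw [h2, hf, sub_zero]
  · intro n m hmn
    have h1 : G n (x m) = gc n ⟨x m, Submodule.subset_span (Set.mem_range_self m)⟩ :=
      hG1 n ⟨x m, Submodule.subset_span (Set.mem_range_self m)⟩
    simp only [ContinuousLinearMap.sub_apply, h1]
    have h2 : gc n ⟨x m, Submodule.subset_span (Set.mem_range_self m)⟩ = 1 := by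
      have := hglx n m
      simp only [gc, LinearMap.mkContinuous_apply]
      rw [this, if_pos hmn]
    rw [h2, hf, sub_self]
end

section
/- A summing sequence has no weakly convergent subsequence. Precisely: let X be a real Banach space and (x_n) a seminormalised basic sequence in X (0 < inf_n ‖x_n‖, sup_n ‖x_n‖ < ∞, and there is K ≥ 1 with ‖∑_{i=1}^m a_i x_i‖ ≤ K ‖∑_{i=1}^p a_i x_i‖ for all m ≤ p and all scalars) for which some x* ∈ X* satisfies x*(x_n) = 1 for all n. Then no subsequence of (x_n) converges weakly in X. In particular, a Banach space containing a summing sequence is not reflexive. -/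
open Filter Topology Finset

/-- Any element of the convex hull of a tail `{x n : n ≥ N}` can be written as a finite
combination `∑_{j < M} a j • x j` with coefficients supported on `[N, M)`. -/
lemma summing_aux_rep {X : Type*} [NormedAddCommGroup X] [NormedSpace ℝ X]
    (x : ℕ → X) (N : ℕ) (u : X) (hu : u ∈ convexHull ℝ (x '' Set.Ici N)) :
    ∃ M : ℕ, N ≤ M ∧ ∃ a : ℕ → ℝ, (∀ j, j < N → a j = 0) ∧
      u = ∑ j ∈ range M, a j • x j := by
  rw [_root_.convexHull_eq] at hu
  obtain ⟨ι, t, w, z, hw0, hw1, hz, hcm⟩ := hu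
  classical
  have hm : ∀ i, i ∈ t → ∃ n, N ≤ n ∧ x n = z i := by
    intro i hi
    obtain ⟨n, hn, hxn⟩ := hz i hi
    exact ⟨n, hn, hxn⟩
  set m : ι → ℕ := fun i => if h : i ∈ t then (hm i h).choose else N with hm_def
  have hmN : ∀ i ∈ t, N ≤ m i := by
    intro i hi; simp only [hm_def, dif_pos hi]; exact (hm i hi).choose_spec.1
  have hmx : ∀ i ∈ t, x (m i) = z i := by
    intro i hi; simp only [hm_def, dif_pos hi]; exact (hm i hi).choose_spec.2
  refine ⟨max N (t.sup m + 1), le_max_left _ _,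
    fun j => ∑ i ∈ t.filter (fun i => m i = j), w i, ?_, ?_⟩
  · intro j hj
    apply Finset.sum_eq_zero
    intro i hi
    simp only [Finset.mem_filter] at hi
    exact absurd (hi.2 ▸ hmN i hi.1) (by omega)
  · have hmap : ∀ i ∈ t, m i ∈ range (max N (t.sup m + 1)) := by
      intro i hi
      rw [Finset.mem_range]
      exact lt_of_le_of_lt (Finset.le_sup hi) (by omega)
    rw [← hcm, Finset.centerMass_eq_of_sum_1 _ _ hw1]
    rw [Finset.sum_congr rfl (fun i hi => by rw [← hmx i hi])]
    rw [← Finset.sum_fiberwise_of_maps_to hmap (fun i => w i • x (m i))]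
    refine Finset.sum_congr rfl (fun j _ => ?_)
    rw [Finset.sum_smul]
    refine Finset.sum_congr rfl (fun i hi => ?_)
    simp only [Finset.mem_filter] at hi
    rw [hi.2]

/-- Core contradiction: a summing basic sequence admits no point lying in the closed convex
hull of every tail. -/
lemma summing_aux_core {X : Type*} [NormedAddCommGroup X] [NormedSpace ℝ X]
    (x : ℕ → X) (K : ℝ) (hK : 1 ≤ K)
    (hb : ∀ (p m : ℕ), m ≤ p → ∀ a : ℕ → ℝ,
      ‖∑ i ∈ range m, a i • x i‖ ≤ K * ‖∑ i ∈ range p, a i • x i‖)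
    (f : X →L[ℝ] ℝ) (hf : ∀ n, f (x n) = 1)
    (x₀ : X) (hx₀ : ∀ N : ℕ, x₀ ∈ closure (convexHull ℝ (x '' Set.Ici N))) : False := by
  have hK0 : (0:ℝ) < K := lt_of_lt_of_le one_pos hK
  have hfne : f ≠ 0 := by
    intro h
    have := hf 0
    rw [h] at this
    simp at this
  have hfpos : (0:ℝ) < ‖f‖ := norm_pos_iff.mpr hfne
  set ε : ℝ := 1 / (4 * K * ‖f‖) with hε_def
  have hε : 0 < ε := by positivity
  -- first convex combination close to x₀
  obtain ⟨u₁, hu₁mem, hu₁close⟩ :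
      ∃ u₁ ∈ convexHull ℝ (x '' Set.Ici 0), dist x₀ u₁ < ε :=
    Metric.mem_closure_iff.mp (hx₀ 0) ε hε
  obtain ⟨M₁, -, a, -, ha⟩ := summing_aux_rep x 0 u₁ hu₁mem
  -- second convex combination, supported beyond M₁
  obtain ⟨u₂, hu₂mem, hu₂close⟩ :
      ∃ u₂ ∈ convexHull ℝ (x '' Set.Ici M₁), dist x₀ u₂ < ε :=
    Metric.mem_closure_iff.mp (hx₀ M₁) ε hε
  obtain ⟨M₂, hM₁₂, b, hb0, hbrep⟩ := summing_aux_rep x M₁ u₂ hu₂mem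
  classical
  set c : ℕ → ℝ := fun j => (if j < M₁ then a j else 0) - b j with hc_def
  have h1 : ∑ j ∈ range M₁, c j • x j = u₁ := by
    simp only [hc_def, sub_smul, Finset.sum_sub_distrib]
    have e1 : ∑ j ∈ range M₁, (if j < M₁ then a j else 0) • x j
        = ∑ j ∈ range M₁, a j • x j := by
      refine Finset.sum_congr rfl (fun j hj => ?_)
      rw [if_pos (Finset.mem_range.mp hj)]
    have e2 : ∑ j ∈ range M₁, b j • x j = 0 := by
      refine Finset.sum_eq_zero (fun j hj => ?_)
      rw [hb0 j (Finset.mem_range.mp hj), zero_smul]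
    rw [e1, e2, ← ha, sub_zero]
  have h2 : ∑ j ∈ range M₂, c j • x j = u₁ - u₂ := by
    simp only [hc_def, sub_smul, Finset.sum_sub_distrib]
    have e1 : ∑ j ∈ range M₂, (if j < M₁ then a j else 0) • x j
        = ∑ j ∈ range M₁, a j • x j := by
      rw [← Finset.sum_subset (Finset.range_subset_range.mpr hM₁₂)]
      · refine Finset.sum_congr rfl (fun j hj => ?_)
        rw [if_pos (Finset.mem_range.mp hj)]
      · intro j _ hj
        rw [if_neg (fun h => hj (Finset.mem_range.mpr h)), zero_smul]
    rw [e1, ← ha, ← hbrep]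
  have hnorm : ‖u₁‖ ≤ K * ‖u₁ - u₂‖ := by
    have := hb M₂ M₁ hM₁₂ c
    rwa [h1, h2] at this
  have hdist : ‖u₁ - u₂‖ < 2 * ε := by
    have : ‖u₁ - u₂‖ ≤ ‖u₁ - x₀‖ + ‖x₀ - u₂‖ := norm_sub_le_norm_sub_add_norm_sub _ _ _
    have d1 : ‖u₁ - x₀‖ < ε := by rw [norm_sub_rev]; rw [dist_eq_norm] at hu₁close; linarith
    have d2 : ‖x₀ - u₂‖ < ε := by rw [dist_eq_norm] at hu₂close; linarith
    linarith
  have hfu₁ : f u₁ = 1 := by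
    have hsub : convexHull ℝ (x '' Set.Ici 0) ⊆ {y : X | f y = 1} := by
      apply convexHull_min
      · rintro y ⟨n, -, rfl⟩
        exact hf n
      · exact convex_hyperplane (f : X →ₗ[ℝ] ℝ).isLinear 1
    exact hsub hu₁mem
  have hle : (1:ℝ) ≤ ‖f‖ * ‖u₁‖ := by
    calc (1:ℝ) = f u₁ := hfu₁.symm
    _ ≤ |f u₁| := le_abs_self _
    _ = ‖f u₁‖ := rfl
    _ ≤ ‖f‖ * ‖u₁‖ := f.le_opNorm u₁
  have : ‖f‖ * ‖u₁‖ < ‖f‖ * (K * (2 * ε)) := by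
    apply mul_lt_mul_of_pos_left _ hfpos
    calc ‖u₁‖ ≤ K * ‖u₁ - u₂‖ := hnorm
    _ < K * (2 * ε) := by
        apply mul_lt_mul_of_pos_left hdist hK0
  have heq : ‖f‖ * (K * (2 * ε)) = 1 / 2 := by
    rw [hε_def]; field_simp; ring
  rw [heq] at this
  linarith

/-- If `x₀` can be separated from no tail, it lies in the closed convex hull of every tail;
helper using Hahn–Banach separation in contrapositive form. -/
lemma summing_aux_mem {X : Type*} [NormedAddCommGroup X] [NormedSpace ℝ X]
    (x : ℕ → X) (x₀ : X) (N : ℕ)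
    (h : ∀ g : X →L[ℝ] ℝ, ∀ u : ℝ, g x₀ > u → ∃ n, N ≤ n ∧ u < g (x n)) :
    x₀ ∈ closure (convexHull ℝ (x '' Set.Ici N)) := by
  by_contra hC
  obtain ⟨g, u, hgb, hgx⟩ := geometric_hahn_banach_closed_point
    ((convex_convexHull ℝ _).closure) isClosed_closure hC
  obtain ⟨n, hn, hun⟩ := h g u hgx
  have : g (x n) < u := hgb _ (subset_closure (subset_convexHull ℝ _ ⟨n, hn, rfl⟩))
  linarith

/-- A summing sequence has no weakly convergent subsequence; in particular, a Banach space
containing a summing sequence is not reflexive (the canonical embedding into the bidual is not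
surjective). -/
theorem summing_sequence_no_weakly_convergent_subsequence
    (X : Type*) [NormedAddCommGroup X] [NormedSpace ℝ X] [CompleteSpace X]
    (x : ℕ → X)
    (h_below : ∃ a : ℝ, 0 < a ∧ ∀ n, a ≤ ‖x n‖)
    (h_above : ∃ b : ℝ, ∀ n, ‖x n‖ ≤ b)
    (h_basic : ∃ K : ℝ, 1 ≤ K ∧ ∀ (p m : ℕ), m ≤ p → ∀ a : ℕ → ℝ,
      ‖∑ i ∈ range m, a i • x i‖ ≤ K * ‖∑ i ∈ range p, a i • x i‖)
    (h_summing : ∃ f : X →L[ℝ] ℝ, ∀ n, f (x n) = 1) :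
    (∀ φ : ℕ → ℕ, StrictMono φ →
      ¬ ∃ x₀ : X, ∀ f : X →L[ℝ] ℝ, Tendsto (fun k => f (x (φ k))) atTop (𝓝 (f x₀))) ∧
    ¬ Function.Surjective (NormedSpace.inclusionInDoubleDual ℝ X) := by
  obtain ⟨K, hK, hb⟩ := h_basic
  obtain ⟨f, hf⟩ := h_summing
  constructor
  · -- no weakly convergent subsequence
    rintro φ hφ ⟨x₀, hconv⟩
    refine summing_aux_core x K hK hb f hf x₀ (fun N => ?_)
    apply summing_aux_mem
    intro g u hgu
    have htend := hconv g
    have : ∀ᶠ k in atTop, u < g (x (φ k)) :=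
      htend.eventually (eventually_gt_nhds hgu)
    obtain ⟨k, hk, hk2⟩ := (this.and (eventually_ge_atTop N)).exists
    exact ⟨φ k, le_trans hk2 (hφ.le_apply), hk⟩
  · -- not reflexive
    intro hsurj
    obtain ⟨bnd, hbnd⟩ := h_above
    set J := NormedSpace.inclusionInDoubleDual ℝ X
    set y : ℕ → WeakDual ℝ (StrongDual ℝ X) :=
      fun n => StrongDual.toWeakDual (J (x n)) with hy_def
    have hball : ∀ n, y n ∈ WeakDual.toStrongDual ⁻¹'
        Metric.closedBall (0 : StrongDual ℝ (StrongDual ℝ X)) (max bnd 0) := by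
      intro n
      simp only [Set.mem_preimage, Metric.mem_closedBall, dist_zero_right]
      calc dist (WeakDual.toStrongDual (y n) : StrongDual ℝ (StrongDual ℝ X)) 0
          = ‖J (x n)‖ := dist_zero_right (J (x n))
        _ ≤ ‖x n‖ := NormedSpace.double_dual_bound ℝ X (x n)
        _ ≤ bnd := hbnd n
        _ ≤ max bnd 0 := le_max_left _ _
    have hcomp : IsCompact (WeakDual.toStrongDual ⁻¹'
        Metric.closedBall (0 : StrongDual ℝ (StrongDual ℝ X)) (max bnd 0)) :=
      WeakDual.isCompact_closedBall 0 (max bnd 0)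
    have hle : Filter.map y atTop ≤ Filter.principal
        (WeakDual.toStrongDual ⁻¹'
          Metric.closedBall (0 : StrongDual ℝ (StrongDual ℝ X)) (max bnd 0)) := by
      rw [Filter.le_principal_iff, Filter.mem_map]
      exact Filter.Eventually.of_forall hball
    obtain ⟨F, -, hF⟩ := hcomp.exists_clusterPt hle
    obtain ⟨x₀, hx₀⟩ := hsurj (WeakDual.toStrongDual F)
    refine summing_aux_core x K hK hb f hf x₀ (fun N => ?_)
    apply summing_aux_mem
    intro g u hgu
    -- F evaluated at g equals g x₀
    have hFg : F g = g x₀ := by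
      have h1 : (WeakDual.toStrongDual F) g = F g := rfl
      rw [← h1, ← hx₀]; rfl
    -- the set {G | u < G g} is an open neighbourhood of F
    have hopen : IsOpen {G : WeakDual ℝ (StrongDual ℝ X) | u < G g} := by
      have hc : Continuous fun G : WeakDual ℝ (StrongDual ℝ X) => G g :=
        WeakBilin.eval_continuous _ g
      exact isOpen_lt continuous_const hc
    have hmemF : F ∈ {G : WeakDual ℝ (StrongDual ℝ X) | u < G g} := by
      simpa [hFg] using hgu
    have hfreq : ∃ᶠ n in atTop, y n ∈ {G : WeakDual ℝ (StrongDual ℝ X) | u < G g} := by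
      have := clusterPt_iff_nonempty.mp hF (hopen.mem_nhds hmemF)
      rw [Filter.frequently_iff]
      intro V hV
      obtain ⟨G, hG1, hG2⟩ := this (Filter.image_mem_map hV)
      obtain ⟨n, hn, rfl⟩ := hG2
      exact ⟨n, hn, hG1⟩
    obtain ⟨n, hn, hn2⟩ := (hfreq.and_eventually (eventually_ge_atTop N)).exists
    refine ⟨n, hn2, ?_⟩
    have : u < (y n) g := hn
    exact this
end

section
/- Let (x_n) be a seminormalised basic sequence in a real Banach space X. Then the following are equivalent: (i) there exists x* ∈ X* with x*(x_n) = 1 for every n (i.e. (x_n) is summing); (ii) (x_n) dominates the summing basis of c₀, i.e. there exists a constant C > 0 such that for every N and all scalars a_1, …, a_N one has max_{1 ≤ k ≤ N} |∑_{i=k}^{N} a_i| ≤ C ‖∑_{i=1}^{N} a_i x_i‖. -/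
open Filter Topology Finset

/-- A seminormalised basic sequence `(x_n)` in a real Banach space is summing (some `x* ∈ X*`
satisfies `x* (x_n) = 1` for all `n`) if and only if it dominates the summing basis of `c₀`:
there is `C > 0` with `max_{k ≤ N} |∑_{i=k}^N a_i| ≤ C ‖∑_{i=1}^N a_i x_i‖` for all scalars. -/
theorem summing_iff_dominates_summing_basis
    (X : Type*) [NormedAddCommGroup X] [NormedSpace ℝ X] [CompleteSpace X]
    (x : ℕ → X)
    (h_below : ∃ a : ℝ, 0 < a ∧ ∀ n, a ≤ ‖x n‖)
    (h_above : ∃ b : ℝ, ∀ n, ‖x n‖ ≤ b)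
    (h_basic : ∃ K : ℝ, 1 ≤ K ∧ ∀ (p m : ℕ), m ≤ p → ∀ a : ℕ → ℝ,
      ‖∑ i ∈ range m, a i • x i‖ ≤ K * ‖∑ i ∈ range p, a i • x i‖) :
    (∃ f : X →L[ℝ] ℝ, ∀ n, f (x n) = 1) ↔
      (∃ C : ℝ, 0 < C ∧ ∀ (N : ℕ) (a : ℕ → ℝ) (k : ℕ), k < N →
        |∑ i ∈ Ico k N, a i| ≤ C * ‖∑ i ∈ range N, a i • x i‖) := by
  obtain ⟨K, hK1, hK⟩ := h_basic
  constructor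
  · rintro ⟨f, hf⟩
    have hKpos : (0:ℝ) < K := lt_of_lt_of_le one_pos hK1
    refine ⟨(‖f‖ + 1) * (K + 1), by positivity, ?_⟩
    intro N a k hk
    have hsum : ∑ i ∈ Ico k N, a i = f (∑ i ∈ Ico k N, a i • x i) := by
      rw [map_sum]
      refine Finset.sum_congr rfl fun i _ => ?_
      simp [hf i]
    have hz : (∑ i ∈ Ico k N, a i • x i)
        = (∑ i ∈ range N, a i • x i) - ∑ i ∈ range k, a i • x i := by
      rw [Finset.sum_Ico_eq_sub _ hk.le]
    have hle1 : ‖∑ i ∈ Ico k N, a i • x i‖ ≤ (1 + K) * ‖∑ i ∈ range N, a i • x i‖ := by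
      rw [hz]
      calc ‖(∑ i ∈ range N, a i • x i) - ∑ i ∈ range k, a i • x i‖
          ≤ ‖∑ i ∈ range N, a i • x i‖ + ‖∑ i ∈ range k, a i • x i‖ := norm_sub_le _ _
        _ ≤ ‖∑ i ∈ range N, a i • x i‖ + K * ‖∑ i ∈ range N, a i • x i‖ := by
            linarith [hK N k hk.le a]
        _ = (1 + K) * ‖∑ i ∈ range N, a i • x i‖ := by ring
    have hopn := f.le_opNorm (∑ i ∈ Ico k N, a i • x i)
    have h0 : (0:ℝ) ≤ ‖∑ i ∈ range N, a i • x i‖ := norm_nonneg _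
    have hfn : (0:ℝ) ≤ ‖f‖ := norm_nonneg _
    calc |∑ i ∈ Ico k N, a i| = ‖f (∑ i ∈ Ico k N, a i • x i)‖ := by
          rw [hsum, Real.norm_eq_abs]
      _ ≤ ‖f‖ * ‖∑ i ∈ Ico k N, a i • x i‖ := hopn
      _ ≤ (‖f‖ + 1) * (K + 1) * ‖∑ i ∈ range N, a i • x i‖ := by nlinarith
  · rintro ⟨C, hC, hdom⟩
    have hli : LinearIndependent ℝ x := by
      rw [linearIndependent_iff']
      intro s g hg i hi
      set N := (s.sup id) + 1 with hN
      set a : ℕ → ℝ := fun j => if j ∈ s then g j else 0 with ha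
      have hsub : s ⊆ range N := by
        intro j hj
        exact Finset.mem_range.2 (Nat.lt_succ_of_le (Finset.le_sup (f := id) hj))
      have hrange : ∑ j ∈ range N, a j • x j = 0 := by
        rw [← hg]
        refine (Finset.sum_subset hsub ?_).symm.trans ?_
        · intro j _ hj
          simp [ha, hj]
        · refine Finset.sum_congr rfl fun j hj => ?_
          simp [ha, hj]
      have htail : ∀ k, ∑ j ∈ Ico k N, a j = 0 := by
        intro k
        rcases lt_or_ge k N with h | h
        · have := hdom N a k h
          rw [hrange, norm_zero, mul_zero] at this
          exact abs_eq_zero.1 (le_antisymm this (abs_nonneg _))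
        · rw [Finset.Ico_eq_empty (by omega), Finset.sum_empty]
      have hak : ∀ k, a k = 0 := by
        intro k
        rcases lt_or_ge k N with h | h
        · have h1 := htail k
          have h2 := htail (k + 1)
          rw [Finset.sum_eq_sum_Ico_succ_bot h] at h1
          linarith
        · have : k ∉ s := fun hks => absurd (hsub hks) (by simp; omega)
          simp [ha, this]
      have := hak i
      simpa [ha, hi] using this
    set S := Submodule.span ℝ (Set.range x) with hS
    let φ₀ : S →ₗ[ℝ] ℝ :=
      (Finsupp.linearCombination ℝ (fun _ : ℕ => (1:ℝ))).comp hli.repr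
    have hφ₀x : ∀ n, φ₀ ⟨x n, Submodule.subset_span ⟨n, rfl⟩⟩ = 1 := by
      intro n
      have hr := hli.repr_eq_single n ⟨x n, Submodule.subset_span ⟨n, rfl⟩⟩ rfl
      simp [φ₀, hr, Finsupp.linearCombination_single]
    have hbound : ∀ y : S, ‖φ₀ y‖ ≤ C * ‖y‖ := by
      intro y
      set c := hli.repr y with hc
      have hy : Finsupp.linearCombination ℝ x c = (y : X) := hli.linearCombination_repr y
      have hφ : φ₀ y = ∑ i ∈ c.support, c i := by
        simp [φ₀, ← hc, Finsupp.linearCombination_apply, Finsupp.sum]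
      rcases eq_or_ne c 0 with h0 | h0
      · rw [hφ, h0]
        simp
        positivity
      · have hne : c.support.Nonempty := Finsupp.support_nonempty_iff.2 h0
        set N := c.support.max' hne + 1 with hNd
        have hsub : c.support ⊆ range N := by
          intro j hj
          exact Finset.mem_range.2 (Nat.lt_succ_of_le (Finset.le_max' _ _ hj))
        have h1 : ∑ i ∈ Ico 0 N, c i = ∑ i ∈ c.support, c i := by
          rw [show Ico 0 N = range N from by rw [Finset.range_eq_Ico]]
          exact (Finset.sum_subset hsub (fun j _ hj => Finsupp.notMem_support_iff.1 hj)).symm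
        have h2 : ∑ i ∈ range N, c i • x i = (y : X) := by
          rw [← hy, Finsupp.linearCombination_apply, Finsupp.sum]
          exact (Finset.sum_subset hsub (fun j _ hj => by
            rw [Finsupp.notMem_support_iff.1 hj, zero_smul])).symm
        have hNpos : 0 < N := Nat.succ_pos _
        have := hdom N c 0 hNpos
        rw [h1, h2] at this
        rw [hφ, Real.norm_eq_abs]
        calc |∑ i ∈ c.support, c i| ≤ C * ‖(y : X)‖ := this
          _ = C * ‖y‖ := rfl
    let φ : S →L[ℝ] ℝ := φ₀.mkContinuous C hbound
    obtain ⟨g, hg, -⟩ := exists_extension_norm_eq S φ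
    refine ⟨g, fun n => ?_⟩
    have := hg ⟨x n, Submodule.subset_span ⟨n, rfl⟩⟩
    rw [this]
    exact hφ₀x n
end

section
/- Let X be a real Banach space, let (x_n) be a weakly Cauchy sequence in X, and suppose there is a sequence (s_n) in X* with c = sup_n ‖s_n‖ < ∞ such that s_n(x_m) = 1 whenever n ≤ m and s_n(x_m) = 0 whenever n > m. Set A = the closed convex hull of {x_{n+j} − x_n : n ∈ ℕ, 1 ≤ j ≤ n} and θ = c^{-1}. Then A is weakly compact, and for every n ∈ ℕ the vectors y_j = x_{n+j} − x_n ∈ A (1 ≤ j ≤ n) and the functionals f_k = c^{-1} s_{n+k} (1 ≤ k ≤ n), which lie in the closed unit ball of X*, satisfy f_k(y_j) = 0 whenever k > j and f_k(y_j) = θ whenever k ≤ j. -/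
open Filter Topology

namespace Staircase

/-- The "summing simplex": nonnegative sequences with partial sums at most 1. -/
def Δ : Set (ℕ → ℝ) :=
  {t | (∀ m, t m ∈ Set.Icc (0:ℝ) 1) ∧ ∀ N, ∑ m ∈ Finset.range N, t m ≤ 1}

lemma isClosed_Δ : IsClosed Δ := by
  have h1 : Δ = (⋂ m, {t : ℕ → ℝ | t m ∈ Set.Icc (0:ℝ) 1}) ∩
      ⋂ N, {t : ℕ → ℝ | ∑ m ∈ Finset.range N, t m ≤ 1} := by
    ext t; simp [Δ, Set.mem_iInter]
  rw [h1]
  refine IsClosed.inter (isClosed_iInter fun m => ?_) (isClosed_iInter fun N => ?_)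
  · exact isClosed_Icc.preimage (continuous_apply m)
  · exact isClosed_le (continuous_finset_sum _ fun m _ => continuous_apply m) continuous_const

lemma isCompact_Δ : IsCompact Δ := by
  refine IsCompact.of_isClosed_subset (isCompact_univ_pi fun _ : ℕ => isCompact_Icc (a := (0:ℝ)) (b := 1)) isClosed_Δ ?_
  intro t ht
  exact fun m _ => ht.1 m

lemma summable_of_memΔ {t : ℕ → ℝ} (ht : t ∈ Δ) : Summable t :=
  summable_of_sum_range_le (fun m => (ht.1 m).1) ht.2

lemma tsum_le_one_of_memΔ {t : ℕ → ℝ} (ht : t ∈ Δ) : ∑' m, t m ≤ 1 :=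
  Real.tsum_le_of_sum_range_le (fun m => (ht.1 m).1) ht.2

lemma summable_smul_of_memΔ {E : Type*} [NormedAddCommGroup E] [NormedSpace ℝ E] [CompleteSpace E]
    {t : ℕ → ℝ} (ht : t ∈ Δ) {y : ℕ → E} {M : ℝ} (hy : ∀ m, ‖y m‖ ≤ M) :
    Summable fun m => t m • y m := by
  refine Summable.of_norm (Summable.of_nonneg_of_le (fun m => norm_nonneg _)
    (fun m => ?_) ((summable_of_memΔ ht).mul_right M))
  rw [norm_smul, Real.norm_eq_abs, abs_of_nonneg (ht.1 m).1]
  exact mul_le_mul_of_nonneg_left (hy m) (ht.1 m).1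

end Staircase

namespace Staircase

lemma summable_mul_of_memΔ {t : ℕ → ℝ} (ht : t ∈ Δ) {a : ℕ → ℝ} {C : ℝ}
    (ha : ∀ m, |a m| ≤ C) : Summable fun m => t m * a m := by
  have := summable_smul_of_memΔ (E := ℝ) ht (y := a) (M := C) (by simpa using ha)
  simpa [smul_eq_mul] using this

/-- tail bound -/
lemma tail_bound {t : ℕ → ℝ} (ht : t ∈ Δ) {a : ℕ → ℝ} {C : ℝ} (haC : ∀ m, |a m| ≤ C)
    {N : ℕ} {ε : ℝ} (hε : 0 ≤ ε) (ha : ∀ m, N ≤ m → |a m| ≤ ε) :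
    |∑' m, t (m + N) * a (m + N)| ≤ ε := by
  have hsum : Summable fun m => t (m + N) * a (m + N) :=
    ((summable_nat_add_iff N).2 (summable_mul_of_memΔ ht haC))
  have habs : Summable fun m => |t (m + N) * a (m + N)| := hsum.abs
  have hst : Summable fun m => t (m + N) := (summable_nat_add_iff N).2 (summable_of_memΔ ht)
  calc |∑' m, t (m + N) * a (m + N)| ≤ ∑' m, |t (m + N) * a (m + N)| := by
        simpa [abs_mul] using norm_tsum_le_tsum_norm (f := fun m => t (m + N) * a (m + N)) (by simpa [abs_mul] using habs)
    _ ≤ ∑' m, t (m + N) * ε := by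
        refine Summable.tsum_le_tsum (fun m => ?_) habs (hst.mul_right ε)
        rw [abs_mul, abs_of_nonneg (ht.1 _).1]
        exact mul_le_mul_of_nonneg_left (ha _ (Nat.le_add_left N m)) (ht.1 _).1
    _ = (∑' m, t (m + N)) * ε := tsum_mul_right
    _ ≤ 1 * ε := by
        refine mul_le_mul_of_nonneg_right ?_ hε
        have := Summable.sum_add_tsum_nat_add (f := t) N (summable_of_memΔ ht)
        have h2 : ∑' m, t (m + N) ≤ ∑' m, t m := by
          rw [← this]
          have : 0 ≤ ∑ m ∈ Finset.range N, t m := Finset.sum_nonneg fun m _ => (ht.1 m).1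
          linarith
        exact h2.trans (tsum_le_one_of_memΔ ht)
    _ = ε := one_mul ε

end Staircase

namespace Staircase

lemma continuousOn_tsum_mul {a : ℕ → ℝ} {C : ℝ} (haC : ∀ m, |a m| ≤ C)
    (ha : Tendsto a atTop (𝓝 0)) :
    ContinuousOn (fun t : ℕ → ℝ => ∑' m, t m * a m) Δ := by
  intro t₀ ht₀
  rw [ContinuousWithinAt, Metric.tendsto_nhds]
  intro ε hε
  obtain ⟨N, hN⟩ : ∃ N, ∀ m, N ≤ m → |a m| ≤ ε / 4 := by
    have := (Metric.tendsto_atTop.1 (ha.sub_const 0)) (ε / 4) (by linarith)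
    obtain ⟨N, hN⟩ := this
    exact ⟨N, fun m hm => by have := hN m hm; simp [Real.dist_eq] at this; linarith [le_of_lt this]⟩
  set G : (ℕ → ℝ) → ℝ := fun t => ∑ m ∈ Finset.range N, t m * a m with hG
  have hGcont : Continuous G :=
    continuous_finset_sum _ fun m _ => (continuous_apply m).mul continuous_const
  have hGev : ∀ᶠ t in 𝓝[Δ] t₀, |G t - G t₀| < ε / 4 := by
    have : ∀ᶠ t in 𝓝 t₀, |G t - G t₀| < ε / 4 := by
      have := Metric.tendsto_nhds.1 (hGcont.tendsto t₀) (ε / 4) (by linarith)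
      simpa [Real.dist_eq] using this
    exact nhdsWithin_le_nhds this
  filter_upwards [hGev, self_mem_nhdsWithin] with t hG4 htΔ
  have hdecomp : ∀ u : ℕ → ℝ, u ∈ Δ →
      (∑' m, u m * a m) = G u + ∑' m, u (m + N) * a (m + N) := by
    intro u hu
    exact (Summable.sum_add_tsum_nat_add N (summable_mul_of_memΔ hu haC)).symm
  rw [Real.dist_eq, hdecomp t htΔ, hdecomp t₀ ht₀]
  have h1 := tail_bound htΔ haC (by linarith : (0:ℝ) ≤ ε / 4) hN
  have h2 := tail_bound ht₀ haC (by linarith : (0:ℝ) ≤ ε / 4) hN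
  have := abs_sub_abs_le_abs_sub (G t) (G t₀)
  calc |G t + (∑' m, t (m + N) * a (m + N)) - (G t₀ + ∑' m, t₀ (m + N) * a (m + N))|
      ≤ |G t - G t₀| + |∑' m, t (m + N) * a (m + N)| + |∑' m, t₀ (m + N) * a (m + N)| := by
        have := abs_add_le (G t - G t₀ + ∑' m, t (m + N) * a (m + N))
          (-(∑' m, t₀ (m + N) * a (m + N)))
        have h3 := abs_add_le (G t - G t₀) (∑' m, t (m + N) * a (m + N))
        rw [abs_neg] at this
        calc _ = |G t - G t₀ + (∑' m, t (m + N) * a (m + N)) +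
              -(∑' m, t₀ (m + N) * a (m + N))| := by congr 1; ring
          _ ≤ _ := by linarith [this, h3]
    _ < ε := by linarith

end Staircase

namespace Staircase

variable {X : Type*} [NormedAddCommGroup X] [NormedSpace ℝ X]

/-- Enumeration of the differences `x (n + j) - x n`, `1 ≤ j ≤ n`, via `Nat.pair`. -/
def stairY (x : ℕ → X) : ℕ → X := fun m =>
  if 1 ≤ (Nat.unpair m).2 ∧ (Nat.unpair m).2 ≤ (Nat.unpair m).1
  then x ((Nat.unpair m).1 + (Nat.unpair m).2) - x (Nat.unpair m).1 else 0

lemma stairY_pair (x : ℕ → X) {n j : ℕ} (h1 : 1 ≤ j) (h2 : j ≤ n) :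
    stairY x (Nat.pair n j) = x (n + j) - x n := by
  simp [stairY, Nat.unpair_pair, h1, h2]

lemma stairY_norm_le (x : ℕ → X) {M : ℝ} (hM : ∀ n, ‖x n‖ ≤ M) (hM0 : 0 ≤ M) (m : ℕ) :
    ‖stairY x m‖ ≤ 2 * M := by
  rw [stairY]
  split
  · exact (norm_sub_le _ _).trans
      (by linarith [hM ((Nat.unpair m).1 + (Nat.unpair m).2), hM (Nat.unpair m).1])
  · simpa using by linarith

lemma stairY_null (x : ℕ → X) (f : X →L[ℝ] ℝ) {l : ℝ}
    (hl : Tendsto (fun n => f (x n)) atTop (𝓝 l)) :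
    Tendsto (fun m => f (stairY x m)) atTop (𝓝 0) := by
  rw [Metric.tendsto_atTop]
  intro ε hε
  obtain ⟨N, hN⟩ := Metric.tendsto_atTop.1 hl (ε / 2) (by linarith)
  refine ⟨(N + 1) * (N + 1), fun m hm => ?_⟩
  rw [dist_zero_right, Real.norm_eq_abs]
  by_cases hv : 1 ≤ (Nat.unpair m).2 ∧ (Nat.unpair m).2 ≤ (Nat.unpair m).1
  · obtain ⟨hv1, hv2⟩ := hv
    have hmn : m = (Nat.unpair m).1 * (Nat.unpair m).1 + (Nat.unpair m).1 + (Nat.unpair m).2 := by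
      conv_lhs => rw [← Nat.pair_unpair m]
      rw [Nat.pair, if_neg (Nat.not_lt.2 hv2)]
    have hnN : N ≤ (Nat.unpair m).1 := by
      by_contra h
      push_neg at h
      have h1 : m < ((Nat.unpair m).1 + 1) * ((Nat.unpair m).1 + 1) := by nlinarith
      nlinarith
    have h1 := hN ((Nat.unpair m).1 + (Nat.unpair m).2) (hnN.trans (Nat.le_add_right _ _))
    have h2 := hN (Nat.unpair m).1 hnN
    rw [Real.dist_eq] at h1 h2
    rw [stairY, if_pos ⟨hv1, hv2⟩, map_sub]
    rw [abs_lt] at h1 h2 ⊢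
    constructor <;> [linarith; linarith]
  · rw [stairY, if_neg hv]
    simpa using hε

end Staircase

namespace Staircase

lemma t2_weakSpace (X : Type*) [NormedAddCommGroup X] [NormedSpace ℝ X] :
    T2Space (WeakSpace ℝ X) := by
  have hinj : Function.Injective (topDualPairing ℝ X).flip := by
    intro u v huv
    rw [NormedSpace.eq_iff_forall_dual_eq ℝ]
    intro g
    exact LinearMap.congr_fun huv g
  exact (WeakBilin.isEmbedding hinj).t2Space

variable {X : Type*} [NormedAddCommGroup X] [NormedSpace ℝ X] [CompleteSpace X]

/-- The candidate weakly compact convex superset. -/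
def K (x : ℕ → X) : Set X := (fun t : ℕ → ℝ => ∑' m, t m • stairY x m) '' Δ

lemma convex_K (x : ℕ → X) {M : ℝ} (hM : ∀ n, ‖x n‖ ≤ M) (hM0 : 0 ≤ M) :
    Convex ℝ (K x) := by
  have hyM := stairY_norm_le x hM hM0
  rintro p ⟨t1, ht1, rfl⟩ q ⟨t2, ht2, rfl⟩ a b ha hb hab
  have hmem : a • t1 + b • t2 ∈ Δ := by
    constructor
    · intro m
      constructor
      · have := (ht1.1 m).1; have := (ht2.1 m).1
        simp only [Pi.add_apply, Pi.smul_apply, smul_eq_mul]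
        positivity
      · have h1 := (ht1.1 m).2; have h2 := (ht2.1 m).2
        have := (ht1.1 m).1; have := (ht2.1 m).1
        simp only [Pi.add_apply, Pi.smul_apply, smul_eq_mul]
        nlinarith
    · intro N
      have h1 := ht1.2 N; have h2 := ht2.2 N
      simp only [Pi.add_apply, Pi.smul_apply, smul_eq_mul, Finset.sum_add_distrib,
        ← Finset.mul_sum]
      nlinarith
  refine ⟨a • t1 + b • t2, hmem, ?_⟩
  have hs1 : Summable fun m => t1 m • stairY x m := summable_smul_of_memΔ ht1 hyM
  have hs2 : Summable fun m => t2 m • stairY x m := summable_smul_of_memΔ ht2 hyM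
  have : (fun m => (a • t1 + b • t2) m • stairY x m)
      = fun m => a • (t1 m • stairY x m) + b • (t2 m • stairY x m) := by
    funext m
    simp only [Pi.add_apply, Pi.smul_apply, smul_eq_mul, add_smul, smul_smul]
  show (∑' m, (a • t1 + b • t2) m • stairY x m)
      = a • (∑' m, t1 m • stairY x m) + b • (∑' m, t2 m • stairY x m)
  rw [this, Summable.tsum_add (hs1.const_smul a) (hs2.const_smul b),
    Summable.tsum_const_smul a hs1, Summable.tsum_const_smul b hs2]

lemma mem_K (x : ℕ → X) {M : ℝ} (hM : ∀ n, ‖x n‖ ≤ M) (hM0 : 0 ≤ M)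
    {n j : ℕ} (h1 : 1 ≤ j) (h2 : j ≤ n) : x (n + j) - x n ∈ K x := by
  classical
  refine ⟨fun m => if m = Nat.pair n j then 1 else 0, ⟨fun m => ?_, fun N => ?_⟩, ?_⟩
  · dsimp only; split <;> simp
  · rw [Finset.sum_ite_eq' (Finset.range N) (Nat.pair n j) (fun _ => (1:ℝ))]
    split <;> simp
  · have : (fun m => (if m = Nat.pair n j then (1:ℝ) else 0) • stairY x m)
        = fun m => if m = Nat.pair n j then x (n + j) - x n else 0 := by
      funext m
      by_cases h : m = Nat.pair n j
      · subst h; simp [stairY_pair x h1 h2]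
      · simp [h]
    show (∑' m, (if m = Nat.pair n j then (1:ℝ) else 0) • stairY x m) = x (n + j) - x n
    rw [this, tsum_ite_eq]

end Staircase

namespace Staircase

variable {X : Type*} [NormedAddCommGroup X] [NormedSpace ℝ X] [CompleteSpace X]

lemma isCompact_weak_K (x : ℕ → X)
    (h_wC : ∀ f : X →L[ℝ] ℝ, ∃ l : ℝ, Tendsto (fun n => f (x n)) atTop (𝓝 l))
    {M : ℝ} (hM : ∀ n, ‖x n‖ ≤ M) (hM0 : 0 ≤ M) :
    IsCompact (toWeakSpace ℝ X '' K x) := by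
  have hyM := stairY_norm_le x hM hM0
  have hcont : ContinuousOn
      (fun t : ℕ → ℝ => toWeakSpaceCLM ℝ X (∑' m, t m • stairY x m)) Δ := by
    rw [continuousOn_iff_continuous_restrict]
    apply WeakBilin.continuous_of_continuous_eval
    intro f
    have heq : (fun tt : Δ => (topDualPairing ℝ X).flip
          (toWeakSpaceCLM ℝ X (∑' m, (tt : ℕ → ℝ) m • stairY x m)) f)
        = fun tt : Δ => ∑' m, (tt : ℕ → ℝ) m * f (stairY x m) := by
      funext tt
      show f (∑' m, (tt : ℕ → ℝ) m • stairY x m) = ∑' m, (tt : ℕ → ℝ) m * f (stairY x m)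
      rw [ContinuousLinearMap.map_tsum f (summable_smul_of_memΔ tt.2 hyM)]
      simp [smul_eq_mul]
    show Continuous fun tt : Δ => (topDualPairing ℝ X).flip
      (toWeakSpaceCLM ℝ X (∑' m, (tt : ℕ → ℝ) m • stairY x m)) f
    rw [heq]
    have haC : ∀ m, |f (stairY x m)| ≤ ‖f‖ * (2 * M) := fun m => by
      calc |f (stairY x m)| ≤ ‖f‖ * ‖stairY x m‖ := f.le_opNorm _
        _ ≤ ‖f‖ * (2 * M) := by
            exact mul_le_mul_of_nonneg_left (hyM m) (norm_nonneg f)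
    obtain ⟨l, hl⟩ := h_wC f
    exact (continuousOn_tsum_mul haC (stairY_null x f hl)).restrict
  have himg := isCompact_Δ.image_of_continuousOn hcont
  have : toWeakSpace ℝ X '' K x
      = (fun t : ℕ → ℝ => toWeakSpaceCLM ℝ X (∑' m, t m • stairY x m)) '' Δ := by
    rw [K, Set.image_image]
    rfl
  rwa [this]

end Staircase


open Staircase in
/-- Let `(x_n)` be a weakly Cauchy sequence in a real Banach space `X` and `(s_n) ⊆ X*` with
`c = sup_n ‖s_n‖ < ∞`, `s_n (x_m) = 1` for `n ≤ m` and `s_n (x_m) = 0` for `n > m`. Then the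
closed convex hull `A` of `{x_{n+j} - x_n : 1 ≤ j ≤ n}` is weakly compact, and with
`θ = c⁻¹` the vectors `y_j = x_{n+j} - x_n ∈ A` together with the functionals
`f_k = c⁻¹ • s_{n+k}`, which lie in the closed unit ball of `X*`, satisfy `f_k (y_j) = 0` for
`k > j` and `f_k (y_j) = θ` for `k ≤ j`. -/
theorem staircase_system_in_weakly_compact_hull
    (X : Type*) [NormedAddCommGroup X] [NormedSpace ℝ X] [CompleteSpace X]
    (x : ℕ → X) (s : ℕ → (X →L[ℝ] ℝ)) (c : ℝ)
    (h_wC : ∀ f : X →L[ℝ] ℝ, ∃ l : ℝ, Tendsto (fun n => f (x n)) atTop (𝓝 l))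
    (h_sup : IsLUB (Set.range fun n => ‖s n‖) c)
    (h_one : ∀ n m : ℕ, n ≤ m → s n (x m) = 1)
    (h_zero : ∀ n m : ℕ, m < n → s n (x m) = 0) :
    IsCompact (toWeakSpace ℝ X ''
      (closure (convexHull ℝ {y : X | ∃ n j : ℕ, 1 ≤ j ∧ j ≤ n ∧ y = x (n + j) - x n}))) ∧
    (∀ n j : ℕ, 1 ≤ j → j ≤ n →
      x (n + j) - x n ∈
        closure (convexHull ℝ {y : X | ∃ n j : ℕ, 1 ≤ j ∧ j ≤ n ∧ y = x (n + j) - x n})) ∧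
    (∀ n k : ℕ, 1 ≤ k → k ≤ n → ‖c⁻¹ • s (n + k)‖ ≤ 1) ∧
    (∀ n j k : ℕ, 1 ≤ j → j ≤ n → 1 ≤ k → k ≤ n →
      (j < k → (c⁻¹ • s (n + k)) (x (n + j) - x n) = 0) ∧
      (k ≤ j → (c⁻¹ • s (n + k)) (x (n + j) - x n) = c⁻¹)) := by
  have hc : 0 < c := by
    have hs0 : s 0 ≠ 0 := by
      intro h
      have := h_one 0 0 le_rfl
      rw [h] at this
      simpa using this
    have : (0:ℝ) < ‖s 0‖ := norm_pos_iff.2 hs0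
    exact lt_of_lt_of_le this (h_sup.1 ⟨0, rfl⟩)
  obtain ⟨M, hM⟩ : ∃ M, ∀ n, ‖x n‖ ≤ M := by
    have hpt : ∀ f : StrongDual ℝ X, ∃ C, ∀ n : ℕ,
        ‖(NormedSpace.inclusionInDoubleDual ℝ X (x n)) f‖ ≤ C := by
      intro f
      obtain ⟨l, hl⟩ := h_wC f
      obtain ⟨C, hC⟩ := hl.norm.bddAbove_range
      exact ⟨C, fun n => hC ⟨n, rfl⟩⟩
    obtain ⟨C', hC'⟩ := banach_steinhaus hpt
    refine ⟨C', fun n => ?_⟩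
    have := (NormedSpace.inclusionInDoubleDualLi ℝ (E := X)).norm_map (x n)
    rw [← this]
    exact hC' n
  have hM0 : 0 ≤ M := le_trans (norm_nonneg _) (hM 0)
  set S : Set X := {y : X | ∃ n j : ℕ, 1 ≤ j ∧ j ≤ n ∧ y = x (n + j) - x n} with hSdef
  have hSK : S ⊆ K x := by
    rintro _ ⟨n, j, h1, h2, rfl⟩
    exact mem_K x hM hM0 h1 h2
  refine ⟨?_, ?_, ?_, ?_⟩
  · haveI : T2Space (WeakSpace ℝ X) := t2_weakSpace X
    have hK := isCompact_weak_K x h_wC hM hM0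
    have hAC : convexHull ℝ S ⊆ K x := convexHull_min hSK (convex_K x hM hM0)
    rw [(convex_convexHull ℝ S).toWeakSpace_closure ℝ]
    exact hK.of_isClosed_subset isClosed_closure
      (closure_minimal (Set.image_mono hAC) hK.isClosed)
  · intro n j h1 h2
    exact subset_closure (subset_convexHull ℝ _ ⟨n, j, h1, h2, rfl⟩)
  · intro n k _ _
    rw [norm_smul c⁻¹ (s (n + k)), Real.norm_eq_abs, abs_of_pos (inv_pos.2 hc)]
    calc c⁻¹ * ‖s (n + k)‖ ≤ c⁻¹ * c :=
          mul_le_mul_of_nonneg_left (h_sup.1 ⟨n + k, rfl⟩) (inv_pos.2 hc).le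
      _ = 1 := inv_mul_cancel₀ hc.ne'
  · intro n j k _ _ hk1 _
    constructor
    · intro hjk
      have h1 : s (n + k) (x (n + j)) = 0 := h_zero _ _ (by omega)
      have h2 : s (n + k) (x n) = 0 := h_zero _ _ (by omega)
      simp [ContinuousLinearMap.smul_apply, map_sub, h1, h2]
    · intro hkj
      have h1 : s (n + k) (x (n + j)) = 1 := h_one _ _ (by omega)
      have h2 : s (n + k) (x n) = 0 := h_zero _ _ (by omega)
      simp [ContinuousLinearMap.smul_apply, map_sub, h1, h2]
end
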